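/- arXiv:2005.04781 — 2 statements merged into one kernel-verified Lean document; each statement's English description precedes it below -/
import Mathlib

section
/- Let f be in the class WRPB and suppose W_f(ω) = ε √(p*)^{m+s} ζ_p^{f*(ω)} for some ω in the Walsh support S_f. Then for every nonzero z ∈ F_p, zω ∈ S_f whenever ω ∈ S_f, and zω ∉ S_f whenever ω ∉ S_f. -/
/-!
If `f` is homogeneous of degree `t`, substituting `x ↦ a x` in the Walsh sum gives
`W_f(a^(t-1) ω) = σ(W_f(ω))`, where `σ : ζ_p ↦ ζ_p^(a^t)` is a Galois conjugation of `ℚ(ζ_p)`;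
as `gcd(t - 1, p - 1) = 1`, every `z ∈ F_p^*` is of the form `a^(t-1)`. A Galois conjugate of `0`
is `0`, so `W_f(zω) = 0 ↔ W_f(ω) = 0`, and for a plateaued `f` the Walsh support is exactly
the set where `W_f` does not vanish.
-/

open scoped BigOperators Classical

noncomputable section

/-- The primitive `p`-th root of unity `ζ_p = exp(2πi/p)` in `ℂ`. -/
def zetaC (p : ℕ) : ℂ := Complex.exp (2 * Real.pi * Complex.I / p)

/-- The additive character `a ↦ ζ_p^a` of `ZMod p` with values in `ℂ`. -/
def chi (p : ℕ) (a : ZMod p) : ℂ := zetaC p ^ a.val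

/-- The principal square root of `p* = η₀(-1)·p`:  `√p` if `p ≡ 1 (mod 4)`,
and `i·√p` if `p ≡ 3 (mod 4)`. -/
def sqrtPstar (p : ℕ) : ℂ :=
  if p % 4 = 1 then (Real.sqrt p : ℂ) else Complex.I * (Real.sqrt p : ℂ)

/-- The Walsh transform `W_f(ω) = ∑_x ζ_p^{f(x) - Tr(ωx)}` of `f : F → ZMod p`,
where `F` is a finite field of characteristic `p` and `Tr` is the trace to `ZMod p`. -/
def walsh (p : ℕ) {F : Type} [Field F] [Fintype F] [Algebra (ZMod p) F]
    (f : F → ZMod p) (ω : F) : ℂ :=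
  ∑ x : F, chi p (f x - Algebra.trace (ZMod p) F (ω * x))

/-- `f` is a weakly regular `s`-plateaued *balanced* function in the class WRPB:
balanced, `f(0)=0`, homogeneous of even degree `t` with `gcd(t-1,p-1)=1`,
and weakly regular with sign `ε` and dual function `fstar` on the Walsh support. -/
structure IsWRPB (p m s : ℕ) {F : Type} [Field F] [Fintype F] [Algebra (ZMod p) F]
    (f : F → ZMod p) (ε : ℤ) (fstar : F → ZMod p) : Prop where
  card_eq : Fintype.card F = p ^ m
  plateaued : ∀ ω : F, ‖walsh p f ω‖ ^ 2 = 0 ∨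
      ‖walsh p f ω‖ ^ 2 = (p : ℝ) ^ (m + s)
  balanced : walsh p f 0 = 0
  map_zero : f 0 = 0
  homog : ∃ t : ℕ, Even t ∧ 0 < t ∧ Nat.gcd (t - 1) (p - 1) = 1 ∧
      ∀ a : ZMod p, a ≠ 0 → ∀ x : F, f (algebraMap (ZMod p) F a * x) = a ^ t * f x
  sign : ε = 1 ∨ ε = -1
  weakly_regular : ∀ ω : F, ‖walsh p f ω‖ ^ 2 = (p : ℝ) ^ (m + s) →
      walsh p f ω = (ε : ℂ) * sqrtPstar p ^ (m + s) * chi p (fstar ω)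
  fstar_eq_zero : ∀ ω : F, ‖walsh p f ω‖ ^ 2 ≠ (p : ℝ) ^ (m + s) → fstar ω = 0

section Character

variable {p : ℕ} [Fact p.Prime]

lemma isPrimitiveRoot_zetaC : IsPrimitiveRoot (zetaC p) p :=
  Complex.isPrimitiveRoot_exp p (Fact.out : p.Prime).ne_zero

lemma chi_mul (c a : ZMod p) : chi p (c * a) = (zetaC p ^ c.val) ^ a.val := by
  have h := pow_mod_orderOf (zetaC p) (c.val * a.val)
  rwa [← isPrimitiveRoot_zetaC.eq_orderOf, pow_mul, ← ZMod.val_mul] at h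

lemma isPrimitiveRoot_zetaC_pow_val {c : ZMod p} (hc : c ≠ 0) :
    IsPrimitiveRoot (zetaC p ^ c.val) p := by
  refine isPrimitiveRoot_zetaC.pow_of_coprime _ ?_
  rw [Nat.coprime_comm, (Fact.out : p.Prime).coprime_iff_not_dvd]
  exact Nat.not_dvd_of_pos_of_lt (ZMod.val_pos.2 hc) (ZMod.val_lt c)

lemma sum_chi_mul_eq_zero {ι : Type*} [Fintype ι] {g : ι → ZMod p}
    (h : ∑ i, chi p (g i) = 0) {c : ZMod p} (hc : c ≠ 0) : ∑ i, chi p (c * g i) = 0 := by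
  set P : Polynomial ℚ := ∑ i, Polynomial.X ^ (g i).val
  have hP : Polynomial.aeval (zetaC p) P = 0 := by simpa [P, chi] using h
  have hmin : minpoly ℚ (zetaC p ^ c.val) = minpoly ℚ (zetaC p) := by
    rw [← Polynomial.cyclotomic_eq_minpoly_rat isPrimitiveRoot_zetaC (Fact.out : p.Prime).pos,
      ← Polynomial.cyclotomic_eq_minpoly_rat (isPrimitiveRoot_zetaC_pow_val hc)
        (Fact.out : p.Prime).pos]
  have hconj : Polynomial.aeval (zetaC p ^ c.val) P = 0 :=
    minpoly.dvd_iff.1 (hmin ▸ minpoly.dvd ℚ _ hP)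
  simpa [P, chi_mul] using hconj

end Character

lemma exists_pow_eq_of_coprime {K : Type*} [Field K] [Fintype K] {n : ℕ}
    (hn : n.Coprime (Fintype.card K - 1)) {z : K} (hz : z ≠ 0) : ∃ a : K, a ≠ 0 ∧ a ^ n = z := by
  have hcard : (Nat.card Kˣ).Coprime n := by
    rwa [Nat.card_eq_fintype_card, Fintype.card_units, Nat.coprime_comm]
  obtain ⟨a, ha⟩ := (powCoprime hcard).surjective (Units.mk0 z hz)
  exact ⟨a, a.ne_zero, by simpa using congrArg Units.val ha⟩

section Walsh

variable {p : ℕ} [Fact p.Prime] {F : Type} [Field F] [Fintype F] [Algebra (ZMod p) F]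
  {f : F → ZMod p} {t : ℕ}

lemma walsh_pow_mul (ht : 0 < t)
    (hhom : ∀ a : ZMod p, a ≠ 0 → ∀ x : F, f (algebraMap (ZMod p) F a * x) = a ^ t * f x)
    {a : ZMod p} (ha : a ≠ 0) (ω : F) :
    walsh p f (algebraMap (ZMod p) F (a ^ (t - 1)) * ω) =
      ∑ x : F, chi p (a ^ t * (f x - Algebra.trace (ZMod p) F (ω * x))) := by
  have ha' : algebraMap (ZMod p) F a ≠ 0 := (map_ne_zero _).2 ha
  rw [walsh, ← Equiv.sum_comp (Equiv.mulLeft₀ _ ha')]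
  refine Finset.sum_congr rfl fun x _ => ?_
  have hpow : a ^ (t - 1) * a = a ^ t := by rw [← pow_succ, Nat.sub_add_cancel ht]
  have htr : algebraMap (ZMod p) F (a ^ (t - 1)) * ω * (algebraMap (ZMod p) F a * x) =
      (a ^ t) • (ω * x) := by
    rw [Algebra.smul_def, ← hpow, map_mul]; ring
  rw [Equiv.mulLeft₀_apply, hhom a ha, htr, map_smul, smul_eq_mul, mul_sub]

lemma walsh_mul_eq_zero_iff (ht : 0 < t) (hcop : Nat.gcd (t - 1) (p - 1) = 1)
    (hhom : ∀ a : ZMod p, a ≠ 0 → ∀ x : F, f (algebraMap (ZMod p) F a * x) = a ^ t * f x)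
    {z : ZMod p} (hz : z ≠ 0) (ω : F) :
    walsh p f (algebraMap (ZMod p) F z * ω) = 0 ↔ walsh p f ω = 0 := by
  have hvanish : ∀ c : ZMod p, c ≠ 0 → ∀ η : F, walsh p f η = 0 →
      walsh p f (algebraMap (ZMod p) F c * η) = 0 := by
    intro c hc η h
    obtain ⟨a, ha, rfl⟩ := exists_pow_eq_of_coprime (by rwa [ZMod.card]) hc
    rw [walsh_pow_mul ht hhom ha]
    exact sum_chi_mul_eq_zero h (pow_ne_zero _ ha)
  refine ⟨fun h => ?_, hvanish z hz ω⟩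
  simpa [← mul_assoc, ← map_mul, hz] using hvanish z⁻¹ (inv_ne_zero hz) _ h

end Walsh

namespace IsWRPB

variable {p m s : ℕ} [Fact p.Prime] {F : Type} [Field F] [Fintype F] [Algebra (ZMod p) F]
  {f : F → ZMod p} {ε : ℤ} {fstar : F → ZMod p}

lemma norm_walsh_sq_eq_iff (hf : IsWRPB p m s f ε fstar) (ω : F) :
    ‖walsh p f ω‖ ^ 2 = (p : ℝ) ^ (m + s) ↔ walsh p f ω ≠ 0 := by
  have hpos : (0 : ℝ) < (p : ℝ) ^ (m + s) := pow_pos (Nat.cast_pos.2 (Fact.out : p.Prime).pos) _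
  rcases hf.plateaued ω with h | h
  · have h0 : walsh p f ω = 0 := by simpa using h
    simp [h0, hpos.ne]
  · exact iff_of_true h fun h0 => by simp [h0, hpos.ne] at h

lemma walsh_mul_eq_zero_iff (hf : IsWRPB p m s f ε fstar) {z : ZMod p} (hz : z ≠ 0) (ω : F) :
    walsh p f (algebraMap (ZMod p) F z * ω) = 0 ↔ walsh p f ω = 0 := by
  obtain ⟨t, -, ht, hcop, hhom⟩ := hf.homog
  exact _root_.walsh_mul_eq_zero_iff ht hcop hhom hz ω

end IsWRPB

theorem stmt1_general (p m s : ℕ) [Fact p.Prime]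
    (F : Type) [Field F] [Fintype F] [Algebra (ZMod p) F]
    (f : F → ZMod p) (ε : ℤ) (fstar : F → ZMod p)
    (hf : IsWRPB p m s f ε fstar) :
    ∀ z : ZMod p, z ≠ 0 → ∀ ω : F,
      (‖walsh p f ω‖ ^ 2 = (p : ℝ) ^ (m + s) →
        ‖walsh p f (algebraMap (ZMod p) F z * ω)‖ ^ 2 = (p : ℝ) ^ (m + s)) ∧
      (‖walsh p f ω‖ ^ 2 ≠ (p : ℝ) ^ (m + s) →
        ‖walsh p f (algebraMap (ZMod p) F z * ω)‖ ^ 2 ≠ (p : ℝ) ^ (m + s)) := by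
  intro z hz ω
  simp only [hf.norm_walsh_sq_eq_iff, ne_eq, hf.walsh_mul_eq_zero_iff hz]
  exact ⟨id, id⟩

/-- For `f ∈ WRPB` and nonzero `z ∈ F_p`, `zω` lies in the Walsh support `S_f`
whenever `ω` does, and lies outside `S_f` whenever `ω` does. -/
theorem stmt1 (p m s : ℕ) [Fact p.Prime] (hodd : Odd p) (hm : 0 < m)
    (F : Type) [Field F] [Fintype F] [Algebra (ZMod p) F]
    (f : F → ZMod p) (ε : ℤ) (fstar : F → ZMod p)
    (hf : IsWRPB p m s f ε fstar) :
    ∀ z : ZMod p, z ≠ 0 → ∀ ω : F,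
      (‖walsh p f ω‖ ^ 2 = (p : ℝ) ^ (m + s) →
        ‖walsh p f (algebraMap (ZMod p) F z * ω)‖ ^ 2 = (p : ℝ) ^ (m + s)) ∧
      (‖walsh p f ω‖ ^ 2 ≠ (p : ℝ) ^ (m + s) →
        ‖walsh p f (algebraMap (ZMod p) F z * ω)‖ ^ 2 ≠ (p : ℝ) ^ (m + s)) :=
  stmt1_general p m s F f ε fstar hf
end
end

section
/- Let C be a linear code over F_p with minimum nonzero-codeword weight w_min and maximum weight w_max. If (p−1)/p < w_min/w_max, then C is minimal, i.e. every nonzero codeword u covers only its scalar multiples: if supp(v) ⊆ supp(u) for nonzero v ∈ C, then v = cu for some c ∈ F_p. -/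
open scoped BigOperators Classical

/-!
If `v` is covered by `u` but is not a multiple of it, then all `q` codewords `v - c • u`
(`c ∈ F_q`) are nonzero, so their weights add up to at least `q · w_min`. On the other hand,
on each coordinate of `supp u` exactly one `c` makes `v - c • u` vanish, and off `supp u` all of
them vanish, so these weights add up to `(q - 1) · wt u ≤ (q - 1) · w_max`.
-/

open Finset

section Weights

variable {F ι : Type*} [Field F] [Fintype F] [DecidableEq F] [Fintype ι]

lemma card_filter_sub_mul_ne_zero (a : F) {b : F} (hb : b ≠ 0) :
    #{c : F | a - c * b ≠ 0} = Fintype.card F - 1 := by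
  have hfilter : ({c : F | a - c * b ≠ 0} : Finset F) = univ.erase (a / b) := by
    rw [← filter_ne']
    refine filter_congr fun c _ => ?_
    rw [sub_ne_zero, ne_comm, Ne, ← eq_div_iff hb]
  rw [hfilter, card_erase_of_mem (mem_univ _), card_univ]

lemma sum_hammingNorm_sub_smul {u v : ι → F} (hcov : ∀ i, v i ≠ 0 → u i ≠ 0) :
    ∑ c : F, hammingNorm (v - c • u) = (Fintype.card F - 1) * hammingNorm u := by
  have hcoord : ∀ i,
      #{c : F | v i - c * u i ≠ 0} = if u i ≠ 0 then Fintype.card F - 1 else 0 := by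
    intro i
    split_ifs with hui
    · exact card_filter_sub_mul_ne_zero _ hui
    · rw [not_not] at hui
      have hvi : v i = 0 := by_contra fun hvi => hcov i hvi hui
      simp [hvi, hui]
  calc ∑ c : F, hammingNorm (v - c • u)
      = ∑ i, #{c : F | v i - c * u i ≠ 0} := by
        simp only [hammingNorm, card_filter, Pi.sub_apply, Pi.smul_apply, smul_eq_mul]
        exact sum_comm
    _ = (Fintype.card F - 1) * hammingNorm u := by
        rw [sum_congr rfl fun i _ => hcoord i, ← sum_filter, sum_const, smul_eq_mul, mul_comm]
        rfl

lemma exists_smul_eq_of_covers {C : Submodule F (ι → F)} {wmin wmax : ℕ}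
    (hmin : ∀ w ∈ C, w ≠ 0 → wmin ≤ hammingNorm w) (hmax : ∀ w ∈ C, hammingNorm w ≤ wmax)
    (hwt : (Fintype.card F - 1) * wmax < Fintype.card F * wmin)
    {u v : ι → F} (hu : u ∈ C) (hv : v ∈ C) (hcov : ∀ i, v i ≠ 0 → u i ≠ 0) :
    ∃ c : F, v = c • u := by
  by_contra! hne
  have hsum : Fintype.card F * wmin ≤ (Fintype.card F - 1) * hammingNorm u := by
    calc Fintype.card F * wmin = ∑ _c : F, wmin := by simp [card_univ]
      _ ≤ ∑ c : F, hammingNorm (v - c • u) := sum_le_sum fun c _ =>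
          hmin _ (C.sub_mem hv (C.smul_mem c hu)) (sub_ne_zero.mpr (hne c))
      _ = (Fintype.card F - 1) * hammingNorm u := sum_hammingNorm_sub_smul hcov
  have := Nat.mul_le_mul_left (Fintype.card F - 1) (hmax u hu)
  omega

end Weights

lemma Nat.sub_one_mul_lt_mul_of_div_lt_div {q a b : ℕ} (hq : 0 < q)
    (h : ((q : ℝ) - 1) / q < (a : ℝ) / b) : (q - 1) * b < q * a := by
  have hq' : (1 : ℝ) ≤ q := by exact_mod_cast hq
  rcases b.eq_zero_or_pos with rfl | hb
  · -- `a / 0 = 0` in `ℝ`, so `h` would say `(q - 1) / q < 0`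
    simp only [CharP.cast_eq_zero, div_zero] at h
    exact absurd h (not_lt.mpr (by positivity))
  rw [div_lt_div_iff₀ (by positivity) (by exact_mod_cast hb)] at h
  exact_mod_cast (show ((q - 1 : ℕ) : ℝ) * b < q * a by push_cast [Nat.cast_sub hq]; linarith)

/-- Ashikhmin–Barg: if `(p-1)/p < w_min/w_max` then the linear code `C ⊆ F_p^n` is minimal:
every nonzero codeword covers only its scalar multiples. -/
theorem stmt13 (p n : ℕ) [Fact p.Prime] (C : Submodule (ZMod p) (Fin n → ZMod p))
    (wmin wmax : ℕ)
    (hmin : ∀ v ∈ C, v ≠ 0 → wmin ≤ (Finset.univ.filter fun i => v i ≠ 0).card)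
    (hmax : ∀ v ∈ C, (Finset.univ.filter fun i => v i ≠ 0).card ≤ wmax)
    (hcond : ((p : ℝ) - 1) / p < (wmin : ℝ) / wmax) :
    ∀ u ∈ C, u ≠ 0 → ∀ v ∈ C, v ≠ 0 →
      (∀ i : Fin n, v i ≠ 0 → u i ≠ 0) → ∃ c : ZMod p, v = c • u := by
  intro u hu _ v hv _ hcov
  have hwt := Nat.sub_one_mul_lt_mul_of_div_lt_div (Fact.out : p.Prime).pos hcond
  rw [← ZMod.card p] at hwt
  exact exists_smul_eq_of_covers hmin hmax hwt hu hv hcov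
end
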